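/- Let a, b, c ≥ 0, let α_1, …, α_{b+c} be pairwise distinct complex numbers, let β_1, …, β_{a+c}, γ_1, …, γ_{a+b} be complex numbers, and let R > 0 satisfy |α_i| < R for all i and |β_j| > R for all j. Then Φ_{a,b,c}(α; β; γ) = (−1)^{c(c−1)/2} · (1/c!) · ∏_{i=1}^{b+c} ∏_{j=1}^{a+c} (α_i − β_j) · (1/(2πi))^c ∮_{|z_1|=R} ⋯ ∮_{|z_c|=R} ∏_{1 ≤ i < j ≤ c} (z_i − z_j)^2 · ∏_{ℓ=1}^{c} [ ∏_{k=1}^{a+b} (z_ℓ − γ_k) ] / [ ∏_{j=1}^{a+c} (z_ℓ − β_j) · ∏_{i=1}^{b+c} (z_ℓ − α_i) ] dz_c ⋯ dz_1, where each contour is the circle of radius R traversed once counterclockwise. (This is the multiple-contour-integral representation, Eq. (2.7) of the paper, with the sign fixed by the explicit definition of Φ.) -/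

import Mathlib

/-- Eq. (2.6) of the paper: the explicit formula for the component of the O(1) loop model
ground state corresponding to three series of nested arches of sizes `a`, `b`, `c`. -/
noncomputable def Phi (a b c : ℕ) (α : Fin (b + c) → ℂ) (β : Fin (a + c) → ℂ)
    (γ : Fin (a + b) → ℂ) : ℂ :=
  ∑ I ∈ Finset.powersetCard c (Finset.univ : Finset (Fin (b + c))),
    ((∏ i ∈ Iᶜ, ∏ j, (α i - β j)) * ∏ i ∈ I, ∏ k, (α i - γ k)) /
      ∏ i ∈ I, ∏ j ∈ Iᶜ, (α i - α j)

/-- The `n`-fold iterated contour integral `∮ ⋯ ∮ f(z_1, …, z_n) dz_n ⋯ dz_1`, each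
contour being the circle of radius `R` centered at `0` traversed once counterclockwise
(the outermost integral is over the first variable). -/
noncomputable def iteratedCircleIntegral : (n : ℕ) → ((Fin n → ℂ) → ℂ) → ℝ → ℂ
  | 0, f, _ => f ![]
  | n + 1, f, R =>
      ∮ z in C(0, R), iteratedCircleIntegral n (fun w => f (Fin.cons z w)) R

/-!
Each contour integral is evaluated by the residue theorem: by partial fractions and Cauchy's
integral formula, `∮ g(z) / ∏ᵢ (z - αᵢ) dz = 2πi ∑ᵢ g(αᵢ) / ∏_{j ≠ i} (αᵢ - αⱼ)` for `g`
holomorphic on the closed disc. Since the squared Vandermonde is entire, the `c` integrals can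
be done one after the other, giving `(2πi)^c` times a sum over all maps `σ : Fin c → Fin (b + c)`.
The Vandermonde kills the non-injective `σ`, and the `c!` orderings of each `c`-subset `I` give
the same term: there `∏_{p<q} (α_{σp} - α_{σq})² = (-1)^{c(c-1)/2} ∏_{i ∈ I} ∏_{j ∈ I, j ≠ i} (αᵢ - αⱼ)`
cancels the part of the residue denominators internal to `I`, leaving the `I`-term of `Φ`.
-/

open Finset Metric

theorem inv_prod_sub_eq_sum_inv_sub {ι K : Type*} [Fintype ι] [DecidableEq ι] [Nonempty ι] [Field K]
    {A : ι → K} (hA : Function.Injective A) {z : K} (hz : ∀ i, z ≠ A i) :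
    (∏ i, (z - A i))⁻¹ = ∑ i, (∏ j ∈ univ.erase i, (A i - A j))⁻¹ * (z - A i)⁻¹ := by
  have hbasis := congrArg (Polynomial.eval z)
    (Lagrange.sum_basis (s := univ) hA.injOn univ_nonempty)
  simp only [Polynomial.eval_finsetSum, Lagrange.basis, Polynomial.eval_prod,
    Lagrange.basisDivisor, Polynomial.eval_mul, Polynomial.eval_C, Polynomial.eval_sub,
    Polynomial.eval_X, Polynomial.eval_one, prod_mul_distrib, prod_inv_distrib] at hbasis
  rw [← mul_one (∏ i, (z - A i))⁻¹, ← hbasis, mul_sum]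
  refine sum_congr rfl fun i _ => ?_
  have hi : z - A i ≠ 0 := sub_ne_zero.mpr (hz i)
  have hrest : ∏ j ∈ univ.erase i, (z - A j) ≠ 0 :=
    prod_ne_zero_iff.mpr fun j _ => sub_ne_zero.mpr (hz j)
  rw [← mul_prod_erase univ _ (mem_univ i)]
  field_simp

theorem circleIntegral_div_prod_sub {ι : Type*} [Fintype ι] [DecidableEq ι] {A : ι → ℂ}
    (hA : Function.Injective A) {c : ℂ} {R : ℝ} (hR : 0 ≤ R) (hAR : ∀ i, A i ∈ ball c R)
    {g : ℂ → ℂ} (hg : DiffContOnCl ℂ g (ball c R)) :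
    (∮ z in C(c, R), g z / ∏ i, (z - A i)) =
      2 * Real.pi * Complex.I * ∑ i, g (A i) / ∏ j ∈ univ.erase i, (A i - A j) := by
  cases isEmpty_or_nonempty ι
  · simpa using hg.circleIntegral_eq_zero hR
  have hzA : ∀ z ∈ sphere c R, ∀ i, z ≠ A i := fun z hz i h =>
    (mem_ball.mp (hAR i)).ne (by rw [← h, mem_sphere.mp hz])
  have hpf : Set.EqOn (fun z => g z / ∏ i, (z - A i))
      (fun z => ∑ i, (∏ j ∈ univ.erase i, (A i - A j))⁻¹ * ((z - A i)⁻¹ * g z))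
      (sphere c R) := fun z hz => by
    simp only [div_eq_mul_inv, inv_prod_sub_eq_sum_inv_sub hA (hzA z hz), mul_sum]
    exact sum_congr rfl fun i _ => by ring
  have hint : ∀ i ∈ univ, CircleIntegrable
      (fun z => (∏ j ∈ univ.erase i, (A i - A j))⁻¹ * ((z - A i)⁻¹ * g z)) c R := fun i _ =>
    (continuousOn_const.mul (((continuousOn_id.sub continuousOn_const).inv₀
      fun z hz => sub_ne_zero.mpr (hzA z hz i)).mul
        (hg.continuousOn_ball.mono sphere_subset_closedBall))).circleIntegrable hR
  rw [circleIntegral.integral_congr hR hpf, circleIntegral.integral_fun_sum hint, mul_sum]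
  refine sum_congr rfl fun i _ => ?_
  rw [circleIntegral.integral_const_mul]
  have hcauchy := hg.circleIntegral_sub_inv_smul (hAR i)
  simp only [smul_eq_mul] at hcauchy
  rw [hcauchy, div_eq_mul_inv]
  ring

theorem iteratedCircleIntegral_const_mul (a : ℂ) (R : ℝ) :
    ∀ {n : ℕ} (f : (Fin n → ℂ) → ℂ),
      iteratedCircleIntegral n (fun w => a * f w) R = a * iteratedCircleIntegral n f R
  | 0, _ => rfl
  | n + 1, f => by
    simp only [iteratedCircleIntegral, iteratedCircleIntegral_const_mul,
      circleIntegral.integral_const_mul]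

/-- Keeping the Vandermonde factor inside an arbitrary entire `F` makes the statement stable
under freezing the outer variable, which is what the induction on `n` needs. -/
theorem iteratedCircleIntegral_mul_prod_div_prod_sub {ι : Type*} [Fintype ι] [DecidableEq ι]
    {A : ι → ℂ} (hA : Function.Injective A) {R : ℝ} (hR : 0 ≤ R) (hAR : ∀ i, ‖A i‖ < R)
    {g : ℂ → ℂ} (hg : DiffContOnCl ℂ g (ball 0 R)) :
    ∀ {n : ℕ} {F : (Fin n → ℂ) → ℂ}, Differentiable ℂ F →
      iteratedCircleIntegral n (fun w => F w * ∏ ℓ, g (w ℓ) / ∏ i, (w ℓ - A i)) R =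
        (2 * Real.pi * Complex.I) ^ n * ∑ σ : Fin n → ι,
          F (A ∘ σ) * ∏ ℓ, g (A (σ ℓ)) / ∏ j ∈ univ.erase (σ ℓ), (A (σ ℓ) - A j)
  | 0, F, _ => by simp [iteratedCircleIntegral, Subsingleton.elim (A ∘ _) ![]]
  | n + 1, F, hF => by
    have hinner : ∀ z, iteratedCircleIntegral n (fun w => F (Fin.cons z w) *
        ∏ ℓ : Fin (n + 1), g ((Fin.cons z w : Fin (n + 1) → ℂ) ℓ) /
          ∏ i, ((Fin.cons z w : Fin (n + 1) → ℂ) ℓ - A i)) R =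
        (2 * Real.pi * Complex.I) ^ n * ((g z * ∑ σ : Fin n → ι, F (Fin.cons z (A ∘ σ)) *
          ∏ ℓ, g (A (σ ℓ)) / ∏ j ∈ univ.erase (σ ℓ), (A (σ ℓ) - A j)) / ∏ i, (z - A i)) := by
      intro z
      simp only [Fin.prod_univ_succ, Fin.cons_zero, Fin.cons_succ, mul_left_comm (F _)]
      rw [iteratedCircleIntegral_const_mul,
        iteratedCircleIntegral_mul_prod_div_prod_sub hA hR hAR hg (F := fun w => F (Fin.cons z w))
          (hF.comp ((differentiable_const z).finCons differentiable_id))]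
      simp only [Function.comp_def, mul_sum, sum_div]
      exact sum_congr rfl fun σ _ => by ring
    have hG : DiffContOnCl ℂ (fun z => g z * ∑ σ : Fin n → ι, F (Fin.cons z (A ∘ σ)) *
        ∏ ℓ, g (A (σ ℓ)) / ∏ j ∈ univ.erase (σ ℓ), (A (σ ℓ) - A j)) (ball 0 R) :=
      hg.smul (Differentiable.diffContOnCl (by fun_prop))
    simp only [iteratedCircleIntegral, hinner]
    rw [circleIntegral.integral_const_mul,
      circleIntegral_div_prod_sub hA hR (fun i => mem_ball_zero_iff.mpr (hAR i)) hG,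
      ← (Fin.consEquiv fun _ => ι).sum_comp, Fintype.sum_prod_type]
    simp only [mul_sum, sum_div]
    refine sum_congr rfl fun i _ => sum_congr rfl fun σ _ => ?_
    simp only [Fin.consEquiv, Equiv.coe_fn_mk, Fin.comp_cons, Fin.prod_univ_succ, Fin.cons_zero,
      Fin.cons_succ]
    ring

theorem card_filter_injective_image_eq {ι : Type*} [Fintype ι] [DecidableEq ι] {c : ℕ}
    {I : Finset ι} (hI : #I = c) :
    #{σ : Fin c → ι | Function.Injective σ ∧ univ.image σ = I} = c.factorial := by
  have hfiber : ({σ : Fin c → ι | Function.Injective σ ∧ univ.image σ = I} : Finset _) =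
      univ.map ⟨fun e : Fin c ↪ I => Subtype.val ∘ e,
        fun e e' h => DFunLike.ext _ _ fun p => Subtype.val_injective (congrFun h p)⟩ := by
    ext σ
    simp only [mem_filter, mem_univ, true_and, mem_map]
    constructor
    · rintro ⟨hσ, rfl⟩
      exact ⟨⟨fun p => ⟨σ p, mem_image_of_mem σ (mem_univ p)⟩,
        fun p q h => hσ (congrArg Subtype.val h)⟩, rfl⟩
    · rintro ⟨e, rfl⟩
      change Function.Injective (Subtype.val ∘ e) ∧ univ.image (Subtype.val ∘ e) = I
      refine ⟨Subtype.val_injective.comp e.injective, eq_of_subset_of_card_le ?_ ?_⟩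
      · exact image_subset_iff.mpr fun p _ => (e p).2
      · rw [card_image_of_injective _ (Subtype.val_injective.comp e.injective), hI, card_fin]
  rw [hfiber, card_map, card_univ, Fintype.card_embedding_eq, Fintype.card_coe, hI,
    Fintype.card_fin, Nat.descFactorial_self]

theorem sum_eq_factorial_smul_sum_powersetCard {ι M : Type*} [Fintype ι] [DecidableEq ι]
    [AddCommMonoid M] {c : ℕ} {f : (Fin c → ι) → M} (H : Finset ι → M)
    (hf₀ : ∀ σ, ¬Function.Injective σ → f σ = 0)
    (hfH : ∀ σ, Function.Injective σ → f σ = H (univ.image σ)) :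
    ∑ σ, f σ = c.factorial • ∑ I ∈ powersetCard c univ, H I := by
  rw [← sum_filter_of_ne fun σ _ hσ => not_not.mp (mt (hf₀ σ) hσ),
    ← sum_fiberwise_of_maps_to (g := fun σ => univ.image σ) (t := powersetCard c univ)
      fun σ hσ => mem_powersetCard_univ.mpr <| by
        rw [card_image_of_injective _ (mem_filter.mp hσ).2, card_univ, Fintype.card_fin],
    smul_sum]
  refine sum_congr rfl fun I hI => ?_
  have hconst : ∀ σ ∈ {σ ∈ univ.filter (fun σ : Fin c → ι => Function.Injective σ) |
      univ.image σ = I}, f σ = H I := fun σ hσ => by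
    simp only [mem_filter, mem_univ, true_and] at hσ
    rw [hfH σ hσ.1, hσ.2]
  rw [sum_congr rfl hconst, sum_const, filter_filter,
    card_filter_injective_image_eq (mem_powersetCard_univ.mp hI)]

theorem prod_sq_sub_eq_neg_one_pow_mul_prod_erase {ι R : Type*} [Fintype ι] [LinearOrder ι] [CommRing R] (x : ι → R) :
    ∏ p ∈ univ.filter (fun p : ι × ι => p.1 < p.2), (x p.1 - x p.2) ^ 2 =
      (-1) ^ (Fintype.card ι).choose 2 * ∏ i, ∏ j ∈ univ.erase i, (x i - x j) := by
  set f : ι × ι → R := fun p => x p.1 - x p.2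
  have hne : ∏ i, ∏ j ∈ univ.erase i, f (i, j) =
      ∏ p ∈ univ.filter (fun p : ι × ι => p.1 ≠ p.2), f p :=
    (prod_finset_product' _ _ _ fun p => by simp [and_comm, eq_comm]).symm
  have hsplit : univ.filter (fun p : ι × ι => p.1 ≠ p.2) =
      univ.filter (fun p : ι × ι => p.1 < p.2) ∪ univ.filter (fun p : ι × ι => p.2 < p.1) := by
    ext p
    simp only [mem_filter, mem_union, mem_univ, true_and]
    exact lt_or_lt_iff_ne.symm
  have hswap : ∏ p ∈ univ.filter (fun p : ι × ι => p.2 < p.1), f p =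
      ∏ p ∈ univ.filter (fun p : ι × ι => p.1 < p.2), f p.swap :=
    prod_equiv (Equiv.prodComm ι ι) (by simp) (by simp)
  rw [show ∏ i, ∏ j ∈ univ.erase i, (x i - x j) = ∏ i, ∏ j ∈ univ.erase i, f (i, j) from rfl, hne,
    hsplit, prod_union (disjoint_filter.mpr fun p _ h h' => lt_asymm h h'), hswap,
    ← prod_mul_distrib, ← Fintype.card_product_filter_lt, ← prod_const, ← prod_mul_distrib]
  exact prod_congr rfl fun p _ => by simp only [f, Prod.fst_swap, Prod.snd_swap]; ring

theorem prod_sq_sub_eq_zero_of_not_injective {ι R : Type*} [Fintype ι] [LinearOrder ι]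
    [CommRing R] {x : ι → R} (hx : ¬Function.Injective x) :
    ∏ p ∈ univ.filter (fun p : ι × ι => p.1 < p.2), (x p.1 - x p.2) ^ 2 = 0 := by
  obtain ⟨i, j, hij, hne⟩ := Function.not_injective_iff.mp hx
  rcases hne.lt_or_gt with h | h
  · exact prod_eq_zero (i := (i, j)) (by simpa using h) (by simp [hij])
  · exact prod_eq_zero (i := (j, i)) (by simpa using h) (by simp [hij])

theorem prod_erase_eq_prod_erase_mul_prod_compl {ι M : Type*} [Fintype ι] [DecidableEq ι]
    [CommMonoid M] {I : Finset ι} {i : ι} (hi : i ∈ I) (φ : ι → M) :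
    ∏ j ∈ univ.erase i, φ j = (∏ j ∈ I.erase i, φ j) * ∏ j ∈ Iᶜ, φ j := by
  rw [← union_compl I, erase_union_distrib, erase_eq_of_notMem (notMem_compl.mpr hi),
    prod_union (disjoint_compl_right.mono_left (erase_subset i I))]

theorem prod_sq_sub_mul_prod_div_prod_erase_sub {ι K : Type*} [Fintype ι] [DecidableEq ι] [Field K]
    {A : ι → K} (hA : Function.Injective A) {c : ℕ} {σ : Fin c → ι}
    (hσ : Function.Injective σ) (G : ι → K) :
    (∏ p ∈ univ.filter (fun p : Fin c × Fin c => p.1 < p.2), (A (σ p.1) - A (σ p.2)) ^ 2) *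
        ∏ ℓ, G (σ ℓ) / ∏ j ∈ univ.erase (σ ℓ), (A (σ ℓ) - A j) =
      (-1) ^ c.choose 2 * ∏ i ∈ univ.image σ, G i / ∏ j ∈ (univ.image σ)ᶜ, (A i - A j) := by
  set I := univ.image σ
  have hdiag : ∏ p, ∏ q ∈ univ.erase p, (A (σ p) - A (σ q)) =
      ∏ i ∈ I, ∏ j ∈ I.erase i, (A i - A j) := by
    rw [prod_image hσ.injOn]
    refine prod_congr rfl fun p _ => ?_
    rw [← image_erase hσ, prod_image hσ.injOn]
  have hdiag0 : ∏ i ∈ I, ∏ j ∈ I.erase i, (A i - A j) ≠ 0 :=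
    prod_ne_zero_iff.mpr fun i _ => prod_ne_zero_iff.mpr fun j hj =>
      sub_ne_zero.mpr (hA.ne (ne_of_mem_erase hj).symm)
  have hres : ∏ ℓ, G (σ ℓ) / ∏ j ∈ univ.erase (σ ℓ), (A (σ ℓ) - A j) =
      ∏ i ∈ I, G i / ((∏ j ∈ I.erase i, (A i - A j)) * ∏ j ∈ Iᶜ, (A i - A j)) := by
    rw [prod_image hσ.injOn]
    exact prod_congr rfl fun ℓ _ => by
      rw [prod_erase_eq_prod_erase_mul_prod_compl (mem_image_of_mem σ (mem_univ ℓ))]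
  rw [prod_sq_sub_eq_neg_one_pow_mul_prod_erase (fun p => A (σ p)), Fintype.card_fin, hdiag, hres, prod_div_distrib,
    prod_div_distrib, prod_mul_distrib]
  field_simp

theorem Phi_eq_mul_sum {a b c : ℕ} {α : Fin (b + c) → ℂ} {β : Fin (a + c) → ℂ}
    (γ : Fin (a + b) → ℂ) (hαβ : ∀ i j, α i ≠ β j) :
    Phi a b c α β γ = (∏ i, ∏ j, (α i - β j)) * ∑ I ∈ powersetCard c univ,
      ∏ i ∈ I, (∏ k, (α i - γ k)) / (∏ j, (α i - β j)) / ∏ j ∈ Iᶜ, (α i - α j) := by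
  rw [Phi, mul_sum]
  refine sum_congr rfl fun I _ => ?_
  have hB : ∏ i ∈ I, ∏ j, (α i - β j) ≠ 0 :=
    prod_ne_zero_iff.mpr fun i _ => prod_ne_zero_iff.mpr fun j _ => sub_ne_zero.mpr (hαβ i j)
  rw [← prod_mul_prod_compl I, prod_div_distrib, prod_div_distrib]
  field_simp

theorem diffContOnCl_div_prod_sub {ι : Type*} [Fintype ι] {β : ι → ℂ} {c : ℂ} {R : ℝ}
    (hβ : ∀ j, β j ∉ closedBall c R) {p : ℂ → ℂ} (hp : Differentiable ℂ p) :
    DiffContOnCl ℂ (fun z => p z / ∏ j, (z - β j)) (ball c R) :=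
  ((hp.differentiableOn.div (by fun_prop) fun z hz =>
    prod_ne_zero_iff.mpr fun j _ => sub_ne_zero.mpr fun (h : z = β j) => hβ j (h ▸ hz)).mono
      closure_ball_subset_closedBall).diffContOnCl

/-- The multiple-contour-integral representation, Eq. (2.7) of the paper (with the sign
fixed by the explicit definition of `Phi`): the contours are circles of radius `R`
enclosing all the poles `α_i` but none of the `β_j`. -/
theorem Phi_contour_integral (a b c : ℕ)
    (α : Fin (b + c) → ℂ) (β : Fin (a + c) → ℂ) (γ : Fin (a + b) → ℂ)
    (hα : Function.Injective α) (R : ℝ) (hR : 0 < R)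
    (hαR : ∀ i, ‖α i‖ < R) (hβR : ∀ j, R < ‖β j‖) :
    Phi a b c α β γ =
      (-1) ^ (c * (c - 1) / 2) * ((c.factorial : ℂ))⁻¹ *
        (∏ i, ∏ j, (α i - β j)) * ((2 * Real.pi * Complex.I)⁻¹) ^ c *
        iteratedCircleIntegral c
          (fun z =>
            (∏ p ∈ Finset.univ.filter (fun p : Fin c × Fin c => p.1 < p.2),
                (z p.1 - z p.2) ^ 2) *
              ∏ ℓ, (∏ k, (z ℓ - γ k)) /
                ((∏ j, (z ℓ - β j)) * ∏ i, (z ℓ - α i))) R := by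
  have hαβ : ∀ i j, α i ≠ β j := fun i j h => (hαR i).not_gt (h ▸ hβR j)
  have hg := diffContOnCl_div_prod_sub (c := 0) (fun j hj => (hβR j).not_ge (by simpa using hj))
    (p := fun z => ∏ k, (z - γ k)) (by fun_prop)
  have key := iteratedCircleIntegral_mul_prod_div_prod_sub hα hR.le hαR hg
    (F := fun z : Fin c → ℂ =>
      ∏ p ∈ univ.filter (fun p : Fin c × Fin c => p.1 < p.2), (z p.1 - z p.2) ^ 2) (by fun_prop)
  simp only [Function.comp_apply] at key
  simp only [← div_div]
  rw [key, sum_eq_factorial_smul_sum_powersetCard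
      (fun I => (-1) ^ c.choose 2 * ∏ i ∈ I,
        (∏ k, (α i - γ k)) / (∏ j, (α i - β j)) / ∏ j ∈ Iᶜ, (α i - α j))
      (fun σ hσ => by
        rw [prod_sq_sub_eq_zero_of_not_injective (x := fun p => α (σ p)) fun h => hσ h.of_comp,
          zero_mul])
      (fun σ hσ => prod_sq_sub_mul_prod_div_prod_erase_sub hα hσ _),
    Phi_eq_mul_sum γ hαβ, nsmul_eq_mul, ← mul_sum, Nat.choose_two_right]
  have hsign : ((-1 : ℂ) ^ (c * (c - 1) / 2)) ^ 2 = 1 := by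
    rw [← pow_mul, pow_mul', neg_one_sq, one_pow]
  have h2πi : 2 * (Real.pi : ℂ) * Complex.I ≠ 0 := by simp [Real.pi_ne_zero]
  have hfac : (c.factorial : ℂ) ≠ 0 := Nat.cast_ne_zero.mpr c.factorial_ne_zero
  rw [inv_pow]
  field_simp
  rw [hsign, mul_one]
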